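/- Let X be a pre-Riesz space with dim X = n < ∞. Then there exist at most n pairwise distinct band projections of rank 1 on X; that is, the set of rank-1 band projections on X has cardinality at most n. -/

import Mathlib

open Pointwise

variable {X : Type*} [AddCommGroup X] [PartialOrder X] [IsOrderedAddMonoid X] [Module ℝ X]
  [PosSMulStrictMono ℝ X] [PosSMulReflectLT ℝ X]

/-- Two elements of an ordered vector space are disjoint if the sets `{x+y, -x-y}` and
`{x-y, y-x}` have the same set of upper bounds. -/
def UDisjoint (x y : X) : Prop :=
  upperBounds ({x + y, -x - y} : Set X) = upperBounds ({x - y, y - x} : Set X)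

/-- The disjoint complement `S^⊥` of a set `S`. -/
def dComp (S : Set X) : Set X := {x : X | ∀ s ∈ S, UDisjoint x s}

/-- A band: a set equal to its double disjoint complement. -/
def IsBand (B : Set X) : Prop := B = dComp (dComp B)

/-- A projection band: a band `B` with `B ∩ B^⊥ = {0}` and `B + B^⊥ = X`. -/
def IsProjBand (B : Set X) : Prop :=
  IsBand B ∧ B ∩ dComp B = {0} ∧ ∀ x : X, ∃ b ∈ B, ∃ c ∈ dComp B, x = b + c

/-- A positive linear operator. -/
def IsPosMap (T : X →ₗ[ℝ] X) : Prop := ∀ x : X, 0 ≤ x → 0 ≤ T x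

/-- A band projection: a linear projection whose range is a projection band and whose
kernel is the disjoint complement of the range. -/
def IsBandProj (P : X →ₗ[ℝ] X) : Prop :=
  P ∘ₗ P = P ∧ IsProjBand (Set.range ⇑P) ∧ (LinearMap.ker P : Set X) = dComp (Set.range ⇑P)

/-- A pre-Riesz space: for every nonempty finite `A ⊆ X` and every `x`, if the upper bounds
of `x + A` are contained in the upper bounds of `A`, then `x ≥ 0`. -/
def IsPreRiesz (X : Type*) [AddCommGroup X] [PartialOrder X] [IsOrderedAddMonoid X] [Module ℝ X]
    [PosSMulStrictMono ℝ X] [PosSMulReflectLT ℝ X] : Prop :=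
  ∀ (A : Set X) (x : X), A.Finite → A.Nonempty →
    upperBounds ((x + ·) '' A) ⊆ upperBounds A → 0 ≤ x

/-! Every rank-one band projection `P` has its range spanned by some `u > 0`: a pre-Riesz space is
directed, so positive vectors span it. Band ranges are solid: `0 ≤ y ≤ x ∈ range P` forces
`y ∈ range P`. For another rank-one band projection `Q` we have `0 ≤ Q u ≤ u`, so `Q u` lies in
both ranges; both are lines and a band projection is determined by its range, so `Q u = 0` unless
`P = Q`. Hence the chosen generators are linearly independent. -/

lemma Submodule.eq_span_singleton_of_finrank_eq_one {K V : Type*} [DivisionRing K]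
    [AddCommGroup V] [Module K V] {W : Submodule K V} (hW : Module.finrank K W = 1)
    {w : V} (hw : w ∈ W) (hw0 : w ≠ 0) : W = Submodule.span K {w} := by
  have : FiniteDimensional K W := Module.finite_of_finrank_eq_succ hW
  refine (Submodule.eq_of_le_of_finrank_eq ?_ ?_).symm
  · rwa [Submodule.span_singleton_le_iff_mem]
  · rw [finrank_span_singleton hw0, hW]

lemma LinearMap.exists_nonneg_apply_ne_zero {R M N : Type*} [Semiring R] [AddCommGroup M]
    [PartialOrder M] [IsOrderedAddMonoid M] [IsDirectedOrder M] [AddCommGroup N] [Module R M]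
    [Module R N] {f : M →ₗ[R] N} (hf : f ≠ 0) : ∃ y : M, 0 ≤ y ∧ f y ≠ 0 := by
  obtain ⟨x, hx⟩ : ∃ x, f x ≠ 0 := by
    by_contra! h
    exact hf (LinearMap.ext h)
  obtain ⟨z, hxz, hz⟩ := exists_ge_ge x 0
  by_cases hfz : f z = 0
  · refine ⟨z - x, sub_nonneg.2 hxz, ?_⟩
    simpa [hfz] using hx
  · exact ⟨z, hz, hfz⟩

lemma IsPreRiesz.isDirectedOrder (hX : IsPreRiesz X) : IsDirectedOrder X := by
  have exists_ge_zero (x : X) : ∃ z, x ≤ z ∧ 0 ≤ z := by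
    by_contra! h
    -- If `{x, 0}` has no upper bound, neither has any translate, so pre-Riesz makes `X` positive.
    have hall (w : X) : 0 ≤ w := by
      refine hX {x, 0} w (Set.toFinite _) (Set.insert_nonempty _ _) fun s hs ↦ ?_
      have hx : w + x ≤ s := hs ⟨x, by simp, rfl⟩
      have h0 : w + 0 ≤ s := hs ⟨0, by simp, rfl⟩
      exact absurd (sub_nonneg.2 (by simpa using h0)) (h (s - w) (le_sub_iff_add_le'.2 hx))
    exact h 0 (neg_nonneg.1 (hall (-x))) le_rfl
  refine ⟨fun x y ↦ ?_⟩
  obtain ⟨z, hz, hz0⟩ := exists_ge_zero (x - y)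
  exact ⟨z + y, sub_le_iff_le_add.1 hz, le_add_of_nonneg_left hz0⟩

section General

variable {E : Type*} [AddCommGroup E] [PartialOrder E]

lemma nonneg_of_add_self_nonneg [Module ℝ E] [PosSMulReflectLE ℝ E] {a : E} (h : 0 ≤ a + a) :
    0 ≤ a :=
  nonneg_of_smul_nonneg_of_pos_left (by rwa [two_smul]) (two_pos : (0 : ℝ) < 2)

namespace UDisjoint

variable {x y s : E}

lemma symm (h : UDisjoint x y) : UDisjoint y x := by
  unfold UDisjoint at *
  rwa [add_comm y, show -y - x = -x - y by abel, Set.pair_comm (y - x)]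

lemma add_le (h : UDisjoint x y) (h1 : x - y ≤ s) (h2 : y - x ≤ s) : x + y ≤ s := by
  have hs : s ∈ upperBounds ({x - y, y - x} : Set E) := by
    rintro t (rfl | rfl) <;> assumption
  rw [← h] at hs
  exact hs (Set.mem_insert _ _)

variable [IsOrderedAddMonoid E] [Module ℝ E] [PosSMulReflectLE ℝ E]

lemma nonneg_of_add_nonneg (h : UDisjoint x y) (hxy : 0 ≤ x + y) : 0 ≤ x ∧ 0 ≤ y := by
  have hub : x + y ∈ upperBounds ({x + y, -x - y} : Set E) := by
    rintro t (rfl | rfl)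
    · exact le_rfl
    · rw [sub_eq_add_neg, ← neg_add]
      exact neg_le_self hxy
  rw [h] at hub
  have h1 : x - y ≤ x + y := hub (Set.mem_insert _ _)
  have h2 : y - x ≤ x + y := hub (Set.mem_insert_of_mem _ rfl)
  constructor <;> apply nonneg_of_add_self_nonneg
  · simpa [show x + y - (y - x) = x + x by abel] using sub_nonneg.2 h2
  · simpa [show x + y - (x - y) = y + y by abel] using sub_nonneg.2 h1

lemma eq_zero_of_le (h : UDisjoint x y) (hy : 0 ≤ y) (hyx : y ≤ x) : y = 0 := by
  have hxy : 0 ≤ x - y := sub_nonneg.2 hyx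
  have hle : x + y ≤ x - y := h.add_le le_rfl ((sub_nonpos.2 hyx).trans hxy)
  have hneg : 0 ≤ -y + -y := by
    simpa [show x - y - (x + y) = -y + -y by abel] using sub_nonneg.2 hle
  exact le_antisymm (neg_nonneg.1 (nonneg_of_add_self_nonneg hneg)) hy

end UDisjoint

namespace IsBandProj

variable [Module ℝ E] {P Q : E →ₗ[ℝ] E}

lemma apply_apply (hP : IsBandProj P) (x : E) : P (P x) = P x :=
  LinearMap.ext_iff.1 hP.1 x

lemma udisjoint_sub_apply (hP : IsBandProj P) (x y : E) : UDisjoint (y - P y) (P x) := by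
  have : y - P y ∈ (LinearMap.ker P : Set E) := by simp [hP.apply_apply]
  rw [hP.2.2] at this
  exact this (P x) ⟨x, rfl⟩

lemma ext_of_range_eq (hP : IsBandProj P) (hQ : IsBandProj Q)
    (h : LinearMap.range P = LinearMap.range Q) : P = Q := by
  refine LinearMap.IsIdempotentElem.ext (p := P) hP.1 hQ.1 ⟨h, SetLike.ext' ?_⟩
  rw [hP.2.2, hQ.2.2, ← LinearMap.coe_range, h, LinearMap.coe_range]

variable [IsOrderedAddMonoid E] [PosSMulReflectLE ℝ E]

lemma apply_nonneg_and_le (hP : IsBandProj P) {x : E} (hx : 0 ≤ x) : 0 ≤ P x ∧ P x ≤ x := by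
  obtain ⟨h1, h2⟩ := (hP.udisjoint_sub_apply x x).symm.nonneg_of_add_nonneg (by simpa using hx)
  exact ⟨h1, sub_nonneg.1 h2⟩

lemma apply_eq_self_of_le (hP : IsBandProj P) {x y : E} (hx : P x = x) (hy : 0 ≤ y)
    (hyx : y ≤ x) : P y = y := by
  have hdisj : UDisjoint x (y - P y) := by simpa [hx] using (hP.udisjoint_sub_apply x y).symm
  have hPy := hP.apply_nonneg_and_le hy
  exact (sub_eq_zero.1 (hdisj.eq_zero_of_le (sub_nonneg.2 hPy.2)
    ((sub_le_self _ hPy.1).trans hyx))).symm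

lemma apply_eq_zero_of_ne (hP : IsBandProj P) (hP1 : Module.finrank ℝ (LinearMap.range P) = 1)
    (hQ : IsBandProj Q) (hQ1 : Module.finrank ℝ (LinearMap.range Q) = 1) (hPQ : P ≠ Q)
    {u : E} (hu : 0 ≤ u) (hPu : P u = u) : Q u = 0 := by
  by_contra hQu
  have hQu' := hQ.apply_nonneg_and_le hu
  have hmemP : Q u ∈ LinearMap.range P := ⟨Q u, hP.apply_eq_self_of_le hPu hQu'.1 hQu'.2⟩
  have hmemQ : Q u ∈ LinearMap.range Q := ⟨u, rfl⟩
  refine hPQ (hP.ext_of_range_eq hQ ?_)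
  rw [Submodule.eq_span_singleton_of_finrank_eq_one hP1 hmemP hQu,
    Submodule.eq_span_singleton_of_finrank_eq_one hQ1 hmemQ hQu]

end IsBandProj

end General

/-- An `n`-dimensional pre-Riesz space admits at most `n` distinct rank-one band
projections. -/
theorem stmt_17 (hX : IsPreRiesz X) [FiniteDimensional ℝ X] :
    {P : X →ₗ[ℝ] X | IsBandProj P ∧ Module.finrank ℝ (LinearMap.range P) = 1}.Finite ∧
    {P : X →ₗ[ℝ] X | IsBandProj P ∧ Module.finrank ℝ (LinearMap.range P) = 1}.ncard
      ≤ Module.finrank ℝ X := by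
  set S := {P : X →ₗ[ℝ] X | IsBandProj P ∧ Module.finrank ℝ (LinearMap.range P) = 1}
  have := hX.isDirectedOrder
  have hgen (P : S) : ∃ u : X, 0 ≤ u ∧ u ≠ 0 ∧ (P : X →ₗ[ℝ] X) u = u := by
    obtain ⟨y, hy, hPy⟩ := LinearMap.exists_nonneg_apply_ne_zero (f := P.1) fun h ↦ by
      have h1 := P.2.2
      rw [h, LinearMap.range_zero, finrank_bot] at h1
      exact zero_ne_one h1
    exact ⟨P.1 y, (P.2.1.apply_nonneg_and_le hy).1, hPy, P.2.1.apply_apply y⟩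
  choose u hu hu0 hPu using hgen
  have hli : LinearIndependent ℝ u := by
    refine linearIndependent_iff_notMem_span.2 fun P hP ↦ hu0 P ?_
    have hker : Submodule.span ℝ (u '' (Set.univ \ {P})) ≤ LinearMap.ker P.1 := by
      rw [Submodule.span_le]
      rintro _ ⟨Q, hQ, rfl⟩
      exact Q.2.1.apply_eq_zero_of_ne Q.2.2 P.2.1 P.2.2 (fun h ↦ hQ.2 (Subtype.ext h)) (hu Q)
        (hPu Q)
    simpa [hPu P] using hker hP
  have : Finite S := hli.finite
  have := Fintype.ofFinite S
  refine ⟨Set.toFinite S, ?_⟩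
  rw [← Nat.card_coe_set_eq, Nat.card_eq_fintype_card]
  exact hli.fintype_card_le_finrank
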